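/- Let (ℓ_e) be a countable family of positive lengths with finite total volume V, and let λ_k denote the k-th smallest element (with multiplicity) of the multiset {(mπ/ℓ_e)² : e ∈ E, m ≥ 1}. Then λ_k / k² → π²/V² as k → ∞. -/

import Mathlib

open Filter

/-- Weyl asymptotics for the increasing enumeration (with multiplicity) of the eigenvalues
`(mπ/ℓ_e)²` of a countable disjoint union of Dirichlet intervals of lengths `ℓ_e` with finite
total volume `V`: the `k`-th smallest eigenvalue `λ_k` (characterized by the counting
function `N(x) = ∑_e ⌊√x ℓ_e/π⌋` via `N(λ_k) ≥ k` and `N(μ) < k` for `μ < λ_k`) satisfies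
`λ_k / k² → π²/V²`. -/
theorem weyl_eigenvalue_asymptotics (ℓ : ℕ → ℝ) (hpos : ∀ e, 0 < ℓ e)
    (hsum : Summable ℓ) (V : ℝ) (hV : V = ∑' e, ℓ e)
    (lam : ℕ → ℝ) (hnn : ∀ k, 0 ≤ lam k)
    (hcount : ∀ k : ℕ, 1 ≤ k →
      (k : ℝ) ≤ ∑' e, (⌊Real.sqrt (lam k) * ℓ e / Real.pi⌋₊ : ℝ) ∧
      ∀ μ : ℝ, 0 ≤ μ → μ < lam k →
        (∑' e, (⌊Real.sqrt μ * ℓ e / Real.pi⌋₊ : ℝ)) < k) :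
    Tendsto (fun k : ℕ => lam k / (k : ℝ) ^ 2) atTop (nhds (Real.pi ^ 2 / V ^ 2)) := by
  have hπ : 0 < Real.pi := Real.pi_pos
  have hVpos : 0 < V := by
    rw [hV]; exact Summable.tsum_pos hsum (fun e => (hpos e).le) 0 (hpos 0)
  set L : ℝ := Real.pi ^ 2 / V ^ 2 with hL
  set g : ℕ → ℝ := fun n => ∑ e ∈ Finset.range n, ℓ e with hg
  -- lower bound
  have lower : ∀ k : ℕ, 1 ≤ k → L ≤ lam k / (k : ℝ) ^ 2 := by
    intro k hk
    have hk0 : (0:ℝ) < k := by exact_mod_cast hk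
    have h1 := (hcount k hk).1
    have hs1 : Summable (fun e => Real.sqrt (lam k) * ℓ e / Real.pi) :=
      (hsum.mul_left _).div_const _
    have hfl : ∀ e, ((⌊Real.sqrt (lam k) * ℓ e / Real.pi⌋₊ : ℕ) : ℝ)
        ≤ Real.sqrt (lam k) * ℓ e / Real.pi := fun e =>
      Nat.floor_le (div_nonneg (mul_nonneg (Real.sqrt_nonneg _) (hpos e).le) hπ.le)
    have hs2 : Summable (fun e => ((⌊Real.sqrt (lam k) * ℓ e / Real.pi⌋₊ : ℕ) : ℝ)) :=
      Summable.of_nonneg_of_le (fun e => Nat.cast_nonneg _) hfl hs1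
    have h2 : (k:ℝ) ≤ Real.sqrt (lam k) * V / Real.pi := by
      calc (k:ℝ) ≤ ∑' e, ((⌊Real.sqrt (lam k) * ℓ e / Real.pi⌋₊ : ℕ) : ℝ) := h1
        _ ≤ ∑' e, Real.sqrt (lam k) * ℓ e / Real.pi := Summable.tsum_le_tsum hfl hs2 hs1
        _ = Real.sqrt (lam k) * V / Real.pi := by
            rw [hV, tsum_div_const, tsum_mul_left]
    have h2' : (k:ℝ) * Real.pi ≤ Real.sqrt (lam k) * V := by
      rw [le_div_iff₀ hπ] at h2; linarith
    have hms := mul_self_le_mul_self (by positivity : (0:ℝ) ≤ (k:ℝ) * Real.pi) h2'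
    have hss : Real.sqrt (lam k) ^ 2 = lam k := Real.sq_sqrt (hnn k)
    rw [hL, div_le_div_iff₀ (by positivity) (by positivity)]
    nlinarith [hms, hss]
  -- upper bound
  have hg1 : ∀ n : ℕ, 1 ≤ n → 0 < g n := fun n hn =>
    Finset.sum_pos (fun e _ => hpos e) (Finset.nonempty_range_iff.mpr (by omega))
  have upper : ∀ n k : ℕ, 1 ≤ n → 1 ≤ k →
      lam k ≤ (Real.pi * ((k:ℝ) + n) / g n) ^ 2 := by
    intro n k hn hk
    have hgn : 0 < g n := hg1 n hn
    set C : ℝ := Real.pi * ((k:ℝ) + n) / g n with hC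
    have hC0 : 0 ≤ C := by positivity
    by_contra hcon
    push_neg at hcon
    have hμ := (hcount k hk).2 (C ^ 2) (sq_nonneg C) hcon
    have hsqrt : Real.sqrt (C ^ 2) = C := Real.sqrt_sq hC0
    have hs1 : Summable (fun e => Real.sqrt (C ^ 2) * ℓ e / Real.pi) :=
      (hsum.mul_left _).div_const _
    have hfl : ∀ e, ((⌊Real.sqrt (C ^ 2) * ℓ e / Real.pi⌋₊ : ℕ) : ℝ)
        ≤ Real.sqrt (C ^ 2) * ℓ e / Real.pi := fun e =>
      Nat.floor_le (div_nonneg (mul_nonneg (Real.sqrt_nonneg _) (hpos e).le) hπ.le)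
    have hs2 : Summable (fun e => ((⌊Real.sqrt (C ^ 2) * ℓ e / Real.pi⌋₊ : ℕ) : ℝ)) :=
      Summable.of_nonneg_of_le (fun e => Nat.cast_nonneg _) hfl hs1
    have hpart : ∑ e ∈ Finset.range n, ((⌊Real.sqrt (C ^ 2) * ℓ e / Real.pi⌋₊ : ℕ) : ℝ)
        ≤ ∑' e, ((⌊Real.sqrt (C ^ 2) * ℓ e / Real.pi⌋₊ : ℕ) : ℝ) :=
      Summable.sum_le_tsum _ (fun e _ => Nat.cast_nonneg _) hs2
    have hterm : ∀ e, C * ℓ e / Real.pi - 1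
        ≤ ((⌊Real.sqrt (C ^ 2) * ℓ e / Real.pi⌋₊ : ℕ) : ℝ) := by
      intro e; rw [hsqrt]; exact (Nat.sub_one_lt_floor _).le
    have hsum_eq : ∑ e ∈ Finset.range n, (C * ℓ e / Real.pi - 1)
        = C * g n / Real.pi - n := by
      rw [Finset.sum_sub_distrib, Finset.sum_const, Finset.card_range]
      rw [← Finset.sum_div, ← Finset.mul_sum]
      simp [hg]
    have hlow2 : C * g n / Real.pi - n
        ≤ ∑ e ∈ Finset.range n, ((⌊Real.sqrt (C ^ 2) * ℓ e / Real.pi⌋₊ : ℕ) : ℝ) := by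
      rw [← hsum_eq]
      exact Finset.sum_le_sum (fun e _ => hterm e)
    have hfinal : C * g n / Real.pi - n < k := by
      calc C * g n / Real.pi - n
          ≤ ∑ e ∈ Finset.range n, ((⌊Real.sqrt (C ^ 2) * ℓ e / Real.pi⌋₊ : ℕ) : ℝ) := hlow2
        _ ≤ ∑' e, ((⌊Real.sqrt (C ^ 2) * ℓ e / Real.pi⌋₊ : ℕ) : ℝ) := hpart
        _ < k := hμ
    have hCeq : C * g n / Real.pi = (k:ℝ) + n := by
      rw [hC]; field_simp
    rw [hCeq] at hfinal
    linarith
  -- limits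
  have hgV : Tendsto g atTop (nhds V) := by
    rw [hV]; exact hsum.hasSum.tendsto_sum_nat
  have hLg : Tendsto (fun n => Real.pi ^ 2 / (g n) ^ 2) atTop (nhds L) := by
    rw [hL]
    exact Tendsto.div tendsto_const_nhds (hgV.pow 2) (pow_ne_zero _ hVpos.ne')
  rw [Metric.tendsto_atTop]
  intro ε hε
  obtain ⟨n, hn1, hnb⟩ : ∃ n, 1 ≤ n ∧ Real.pi ^ 2 / (g n) ^ 2 < L + ε / 2 := by
    have h1 := hLg.eventually_lt_const (by linarith : L < L + ε / 2)
    obtain ⟨n, hn2, hn1⟩ := ((eventually_ge_atTop 1).and h1).exists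
    exact ⟨n, hn2, hn1⟩
  have hgn := hg1 n hn1
  have hlim2 : Tendsto (fun k : ℕ => (Real.pi ^ 2 / (g n) ^ 2) * ((1:ℝ) + n / k) ^ 2)
      atTop (nhds (Real.pi ^ 2 / (g n) ^ 2)) := by
    have h0 : Tendsto (fun k : ℕ => (n:ℝ) / k) atTop (nhds 0) :=
      tendsto_const_div_atTop_nhds_zero_nat (n:ℝ)
    have h1 : Tendsto (fun k : ℕ => (1:ℝ) + n / k) atTop (nhds 1) := by
      simpa using tendsto_const_nhds.add h0
    have h2 : Tendsto (fun k : ℕ => (Real.pi ^ 2 / (g n) ^ 2) * ((1:ℝ) + n / k) ^ 2)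
        atTop (nhds ((Real.pi ^ 2 / (g n) ^ 2) * 1 ^ 2)) :=
      Tendsto.mul tendsto_const_nhds (h1.pow 2)
    simpa using h2
  have hev : ∀ᶠ k : ℕ in atTop,
      (Real.pi ^ 2 / (g n) ^ 2) * ((1:ℝ) + n / k) ^ 2 < L + ε :=
    hlim2.eventually_lt_const (by linarith)
  obtain ⟨K, hK⟩ := eventually_atTop.mp (hev.and (eventually_ge_atTop 1))
  refine ⟨K, fun k hk => ?_⟩
  obtain ⟨hk1, hk2⟩ := hK k hk
  have hkpos : (0:ℝ) < k := by exact_mod_cast hk2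
  have hlow := lower k hk2
  have hup := upper n k hn1 hk2
  have hub : lam k / (k:ℝ) ^ 2 ≤ (Real.pi ^ 2 / (g n) ^ 2) * ((1:ℝ) + n / k) ^ 2 := by
    rw [div_le_iff₀ (by positivity)]
    calc lam k ≤ (Real.pi * ((k:ℝ) + n) / g n) ^ 2 := hup
      _ = Real.pi ^ 2 / (g n) ^ 2 * ((1:ℝ) + n / k) ^ 2 * (k:ℝ) ^ 2 := by
          field_simp
  rw [Real.dist_eq, abs_of_nonneg (sub_nonneg.mpr hlow)]
  linarith
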